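/- Let S be a 0-F-inverse semigroup, G a group, σ : S^× → G a morphism, and e ∈ E(S) ∖ {0}. Then the following three subsets of G coincide: {σ(s) : s ∈ M(S), e ≤ s* s, s e s* = e} ∪ {1}, {σ(s) : s ∈ S^×, e ≤ s* s, s e s* = e}, and {σ(s) : s ∈ S^×, s s* = s* s = e}. -/

import Mathlib

/-!
Idempotents of an inverse semigroup commute, whence `(s t)* = t* s*` and `s = m (s* s)`
whenever `s ≤ m`. So if `e ≤ s* s` and `s e s* = e`, the same holds for the maximal element `m`
above `s`, and `t = s e` satisfies `t t* = t* t = e`. A morphism to a group sends nonzero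
idempotents to `1`, so it takes the same value on `s`, `m` and `s e`; the value `1` is `σ e`.
-/

/-- An inverse semigroup structure on a semigroup with zero: `star s` is the unique
generalized inverse of `s`. -/
structure IsInvSemigroup (S : Type*) [SemigroupWithZero S] (star : S → S) : Prop where
  mul_star_mul : ∀ s : S, s * star s * s = s
  star_mul_star : ∀ s : S, star s * s * star s = star s
  star_unique : ∀ s t : S, s * t * s = s → t * s * t = t → t = star s

/-- `e` belongs to the semilattice of idempotents `E(S) = {s s* : s ∈ S}`. -/
def IsIdemE {S : Type*} [SemigroupWithZero S] (star : S → S) (e : S) : Prop :=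
  ∃ x : S, e = x * star x

/-- The natural partial order on an inverse semigroup: `s ≤ t` iff `s = e t` for some
idempotent `e`. -/
def natLe {S : Type*} [SemigroupWithZero S] (star : S → S) (s t : S) : Prop :=
  ∃ e : S, IsIdemE star e ∧ s = e * t

/-- `m` is a maximal element of `(S^×, ≤)`. -/
def IsMaxNonzero {S : Type*} [SemigroupWithZero S] (star : S → S) (m : S) : Prop :=
  m ≠ 0 ∧ ∀ t : S, t ≠ 0 → natLe star m t → t = m

/-- `S` is `0`-`F`-inverse: every nonzero element lies beneath a unique maximal element
of `(S^×, ≤)`. -/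
def ZeroFInverse {S : Type*} [SemigroupWithZero S] (star : S → S) : Prop :=
  ∀ s : S, s ≠ 0 → ∃! m : S, IsMaxNonzero star m ∧ natLe star s m

/-- A morphism (grading) `σ : S^× → G`: `σ(st) = σ(s)σ(t)` whenever `st ≠ 0`. -/
def IsGrading {S : Type*} [SemigroupWithZero S] {G : Type*} [Group G] (σ : S → G) : Prop :=
  ∀ s t : S, s ≠ 0 → t ≠ 0 → s * t ≠ 0 → σ (s * t) = σ s * σ t

namespace IsInvSemigroup

variable {S : Type*} [SemigroupWithZero S] {star : S → S} (h : IsInvSemigroup S star)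
include h

lemma star_star (s : S) : star (star s) = s :=
  (h.star_unique (star s) s (h.star_mul_star s) (h.mul_star_mul s)).symm

lemma star_eq_self_of_isIdempotentElem {e : S} (he : IsIdempotentElem e) : star e = e :=
  (h.star_unique e e (by rw [he.eq, he.eq]) (by rw [he.eq, he.eq])).symm

lemma isIdempotentElem_mul_star (s : S) : IsIdempotentElem (s * star s) := by
  rw [IsIdempotentElem, ← mul_assoc, h.mul_star_mul]

lemma isIdempotentElem_star_mul (s : S) : IsIdempotentElem (star s * s) := by
  simpa only [h.star_star] using h.isIdempotentElem_mul_star (star s)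

lemma isIdemE_iff {e : S} : IsIdemE star e ↔ IsIdempotentElem e := by
  refine ⟨fun ⟨x, hx⟩ ↦ hx ▸ h.isIdempotentElem_mul_star x, fun he ↦ ⟨e, ?_⟩⟩
  rw [h.star_eq_self_of_isIdempotentElem he, he.eq]

/-- With `x = (e f)*`, `f x e` is also an inverse of `e f`, so `x = f x e`; this forces `x`,
and hence `e f = x*`, to be idempotent. -/
lemma isIdempotentElem_mul {e f : S} (he : IsIdempotentElem e) (hf : IsIdempotentElem f) :
    IsIdempotentElem (e * f) := by
  set x := star (e * f) with hx
  have hxefx : x * (e * f) * x = x := h.star_mul_star (e * f)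
  have hfxe : f * x * e = x := by
    refine h.star_unique (e * f) (f * x * e) ?_ ?_
    · calc e * f * (f * x * e) * (e * f) = e * f * x * (e * f) := by
            simp only [mul_assoc, he.mul_self_mul, hf.mul_self_mul]
        _ = e * f := h.mul_star_mul (e * f)
    · calc f * x * e * (e * f) * (f * x * e) = f * (x * (e * f) * x) * e := by
            simp only [mul_assoc, he.mul_self_mul, hf.mul_self_mul]
        _ = f * x * e := by rw [hxefx]
  have hxx : IsIdempotentElem x := by
    calc x * x = f * (x * (e * f) * x) * e := by
          conv_lhs => rw [← hfxe]
          simp only [mul_assoc]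
      _ = x := by rw [hxefx, hfxe]
  rwa [← h.star_star (e * f), ← hx, h.star_eq_self_of_isIdempotentElem hxx]

lemma commute_of_isIdempotentElem {e f : S} (he : IsIdempotentElem e)
    (hf : IsIdempotentElem f) : Commute e f := by
  have hef := h.isIdempotentElem_mul he hf
  have hfe := h.isIdempotentElem_mul hf he
  have : f * e = star (e * f) := by
    refine h.star_unique (e * f) (f * e) ?_ ?_
    · calc e * f * (f * e) * (e * f) = (e * f) * (e * f) := by
            simp only [mul_assoc, he.mul_self_mul, hf.mul_self_mul]
        _ = e * f := hef.eq
    · calc f * e * (e * f) * (f * e) = (f * e) * (f * e) := by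
            simp only [mul_assoc, he.mul_self_mul, hf.mul_self_mul]
        _ = f * e := hfe.eq
  rw [Commute, SemiconjBy, this, h.star_eq_self_of_isIdempotentElem hef]

lemma star_mul (s t : S) : star (s * t) = star t * star s := by
  have hcomm := h.commute_of_isIdempotentElem (h.isIdempotentElem_mul_star t)
    (h.isIdempotentElem_star_mul s)
  refine (h.star_unique (s * t) (star t * star s) ?_ ?_).symm
  · calc s * t * (star t * star s) * (s * t) = s * ((t * star t) * (star s * s)) * t := by
          simp only [mul_assoc]
      _ = s * star s * s * (t * star t * t) := by rw [hcomm.eq]; simp only [mul_assoc]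
      _ = s * t := by rw [h.mul_star_mul, h.mul_star_mul]
  · calc star t * star s * (s * t) * (star t * star s)
          = star t * ((star s * s) * (t * star t)) * star s := by simp only [mul_assoc]
      _ = star t * t * star t * (star s * s * star s) := by
          rw [← hcomm.eq]; simp only [mul_assoc]
      _ = star t * star s := by rw [h.star_mul_star, h.star_mul_star]

lemma eq_mul_star_mul_of_natLe {s m : S} (hsm : natLe star s m) : s = m * (star s * s) := by
  obtain ⟨g, hg, rfl⟩ := hsm
  have hg' := h.isIdemE_iff.1 hg
  rw [h.star_mul, h.star_eq_self_of_isIdempotentElem hg']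
  calc g * m = g * (m * star m * m) := by rw [h.mul_star_mul]
    _ = (m * star m) * g * m := by
        rw [← (h.commute_of_isIdempotentElem hg' (h.isIdempotentElem_mul_star m)).eq]
        simp only [mul_assoc]
    _ = m * (star m * g * (g * m)) := by simp only [mul_assoc, hg'.mul_self_mul]

lemma natLe_iff_of_isIdempotentElem {e f : S} (he : IsIdempotentElem e)
    (hf : IsIdempotentElem f) : natLe star e f ↔ e * f = e := by
  refine ⟨?_, fun hef ↦ ⟨e, h.isIdemE_iff.2 he, hef.symm⟩⟩
  rintro ⟨g, -, rfl⟩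
  rw [mul_assoc, hf.eq]

lemma conj_of_natLe {e s m : S} (he : IsIdempotentElem e) (hsm : natLe star s m)
    (hle : natLe star e (star s * s)) (hconj : s * e * star s = e) :
    natLe star e (star m * m) ∧ m * e * star m = e := by
  set f := star s * s
  have hf : IsIdempotentElem f := h.isIdempotentElem_star_mul s
  have hmm : IsIdempotentElem (star m * m) := h.isIdempotentElem_star_mul m
  have hef : e * f = e := (h.natLe_iff_of_isIdempotentElem he hf).1 hle
  have hfe : f * e = e := by rw [← (h.commute_of_isIdempotentElem he hf).eq, hef]
  have hs : s = m * f := h.eq_mul_star_mul_of_natLe hsm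
  have hs' : star s = f * star m := by
    rw [hs, h.star_mul, h.star_eq_self_of_isIdempotentElem hf]
  have hfmm : f * (star m * m) = f := by
    calc f * (star m * m) = f * f * (star m * m) := by rw [hf.eq]
      _ = f * (star m * m * f) := by
          rw [← (h.commute_of_isIdempotentElem hf hmm).eq]; exact mul_assoc f f _
      _ = star s * s := by rw [hs', hs]; simp only [mul_assoc]
  refine ⟨(h.natLe_iff_of_isIdempotentElem he hmm).2 ?_, ?_⟩
  · rw [← hef, mul_assoc, hfmm]
  · calc m * e * star m = m * (f * e) * star m := by rw [hfe]
      _ = m * f * (e * f) * star m := by rw [hef, mul_assoc m f e]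
      _ = s * e * star s := by rw [hs', hs]; simp only [mul_assoc]
      _ = e := hconj

lemma mul_star_mul_eq_of_conj {e s : S} (he : IsIdempotentElem e)
    (hle : natLe star e (star s * s)) (hconj : s * e * star s = e) :
    s * e * star (s * e) = e ∧ star (s * e) * (s * e) = e := by
  have hef : e * (star s * s) = e :=
    (h.natLe_iff_of_isIdempotentElem he (h.isIdempotentElem_star_mul s)).1 hle
  rw [h.star_mul, h.star_eq_self_of_isIdempotentElem he]
  constructor
  · calc s * e * (e * star s) = s * e * star s := by simp only [mul_assoc, he.mul_self_mul]
      _ = e := hconj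
  · calc e * star s * (s * e) = e * (star s * s) * e := by simp only [mul_assoc]
      _ = e := by rw [hef, he.eq]

lemma conj_of_mul_star_eq {e t : S} (he : IsIdempotentElem e) (hl : t * star t = e)
    (hr : star t * t = e) : natLe star e (star t * t) ∧ t * e * star t = e := by
  refine ⟨by rw [hr]; exact (h.natLe_iff_of_isIdempotentElem he he).2 he.eq, ?_⟩
  calc t * e * star t = t * (star t * t) * star t := by rw [hr]
    _ = t * star t := by rw [← mul_assoc, h.mul_star_mul]
    _ = e := hl

end IsInvSemigroup

namespace IsGrading

variable {S G : Type*} [SemigroupWithZero S] [Group G] {σ : S → G} (hσ : IsGrading σ)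
include hσ

lemma map_eq_one_of_isIdempotentElem {f : S} (hf0 : f ≠ 0) (hf : IsIdempotentElem f) :
    σ f = 1 := by
  have := hσ f f hf0 hf0 (by rwa [hf.eq])
  rwa [hf.eq, left_eq_mul] at this

lemma map_eq_of_natLe {star : S → S} (hinv : IsInvSemigroup S star) {s m : S} (hs0 : s ≠ 0)
    (hsm : natLe star s m) : σ s = σ m := by
  obtain ⟨g, hg, rfl⟩ := hsm
  have hg0 : g ≠ 0 := by rintro rfl; exact hs0 (zero_mul m)
  have hm0 : m ≠ 0 := by rintro rfl; exact hs0 (mul_zero g)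
  rw [hσ g m hg0 hm0 hs0,
    hσ.map_eq_one_of_isIdempotentElem hg0 (hinv.isIdemE_iff.1 hg), one_mul]

lemma map_mul_idempotent {e s : S} (he0 : e ≠ 0) (he : IsIdempotentElem e) (hs0 : s ≠ 0)
    (hse0 : s * e ≠ 0) : σ (s * e) = σ s := by
  rw [hσ s e hs0 he0 hse0, hσ.map_eq_one_of_isIdempotentElem he0 he, mul_one]

end IsGrading

/-- for a `0`-`F`-inverse semigroup `S`, a morphism `σ : S^× → G` and a
nonzero idempotent `e`, the following subsets of `G` coincide:
`{σ(s) : s ∈ M(S), e ≤ s* s, s e s* = e} ∪ {1}`,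
`{σ(s) : s ∈ S^×, e ≤ s* s, s e s* = e}` and
`{σ(s) : s ∈ S^×, s s* = s* s = e}`. -/
theorem stmt10 {S G : Type*} [SemigroupWithZero S] [Group G] (star : S → S)
    (hinv : IsInvSemigroup S star) (hF : ZeroFInverse star)
    (σ : S → G) (hσ : IsGrading σ)
    (e : S) (he : IsIdemE star e) (he0 : e ≠ 0) :
    (insert (1 : G) {g : G | ∃ s : S, IsMaxNonzero star s ∧ natLe star e (star s * s) ∧
        s * e * star s = e ∧ g = σ s} =
      {g : G | ∃ s : S, s ≠ 0 ∧ natLe star e (star s * s) ∧ s * e * star s = e ∧ g = σ s}) ∧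
    ({g : G | ∃ s : S, s ≠ 0 ∧ natLe star e (star s * s) ∧ s * e * star s = e ∧ g = σ s} =
      {g : G | ∃ s : S, s ≠ 0 ∧ s * star s = e ∧ star s * s = e ∧ g = σ s}) := by
  have hidem := hinv.isIdemE_iff.1 he
  refine ⟨Set.ext fun g ↦ ⟨?_, ?_⟩, Set.ext fun g ↦ ⟨?_, ?_⟩⟩
  · rintro (rfl | ⟨s, hmax, hle, hconj, rfl⟩)
    · have hstar := hinv.star_eq_self_of_isIdempotentElem hidem
      obtain ⟨hle, hconj⟩ := hinv.conj_of_mul_star_eq hidem (by rw [hstar, hidem.eq])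
        (by rw [hstar, hidem.eq])
      exact ⟨e, he0, hle, hconj, (hσ.map_eq_one_of_isIdempotentElem he0 hidem).symm⟩
    · exact ⟨s, hmax.1, hle, hconj, rfl⟩
  · rintro ⟨s, hs0, hle, hconj, rfl⟩
    obtain ⟨m, ⟨hmax, hsm⟩, -⟩ := hF s hs0
    obtain ⟨hle', hconj'⟩ := hinv.conj_of_natLe hidem hsm hle hconj
    exact Or.inr ⟨m, hmax, hle', hconj', hσ.map_eq_of_natLe hinv hs0 hsm⟩
  · rintro ⟨s, hs0, hle, hconj, rfl⟩
    obtain ⟨hl, hr⟩ := hinv.mul_star_mul_eq_of_conj hidem hle hconj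
    have hse0 : s * e ≠ 0 := by rintro h0; rw [h0, zero_mul] at hl; exact he0 hl.symm
    exact ⟨s * e, hse0, hl, hr, (hσ.map_mul_idempotent he0 hidem hs0 hse0).symm⟩
  · rintro ⟨t, ht0, hl, hr, rfl⟩
    obtain ⟨hle, hconj⟩ := hinv.conj_of_mul_star_eq hidem hl hr
    exact ⟨t, ht0, hle, hconj, rfl⟩
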